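/- arXiv:2004.03131 — 5 statements merged into one kernel-verified Lean document; each statement's English description precedes it below -/
import Mathlib

section
/- For every integer n > 1 and every p ∈ (0,1), the n×n Bernoulli(p) random matrix M_n satisfies P{M_n contains a zero row or a zero column} ≥ 2 − 2(1 − (1−p)ⁿ)ⁿ − 4n²(1−p)^{2n−1}. -/
open MeasureTheory

/-- `M` is a random `n × n` matrix with i.i.d. Bernoulli(p) entries. -/
def IsBernoulliMatrix {Ω : Type*} [MeasurableSpace Ω] (μ : Measure Ω) {n : ℕ}
    (M : Ω → Matrix (Fin n) (Fin n) ℝ) (p : ℝ) : Prop :=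
  (∀ ω i j, M ω i j = 0 ∨ M ω i j = 1) ∧
  ∀ A : Matrix (Fin n) (Fin n) ℝ, (∀ i j, A i j = 0 ∨ A i j = 1) →
    μ {ω | M ω = A} =
      ENNReal.ofReal
        (p ^ (Finset.univ.filter (fun ij : Fin n × Fin n => A ij.1 ij.2 = 1)).card *
          (1 - p) ^ (Finset.univ.filter (fun ij : Fin n × Fin n => A ij.1 ij.2 = 0)).card)

/-!
The measure `μ` is only known on the atoms `{M = A}`, and the events involved need not be
measurable, so each probability is compared, using subadditivity alone, with the weight
`W(E) = ∑_{A ∈ E} p ^ #ones(A) * (1 - p) ^ #zeros(A)` of the 0-1 matrices in the event: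
`μ E ≤ W(E)`, and `W(E) ≤ μ E` because `μ E + μ Eᶜ ≥ 1` and `W` has total mass `1`.

The weight factorises over rows, so with `q = 1 - p` the matrices without a zero row weigh
`(1 - qⁿ)ⁿ`, and by transposition so do those without a zero column. By inclusion–exclusion,
`W(zero row or zero column) = 2 (1 - (1 - qⁿ)ⁿ) - W(zero row and zero column)`, and a union bound
over the position `(i, j)` of the zero row and zero column, whose union has `2n - 1` entries,
bounds the last term by `n² q^(2n-1)`.
-/

open Finset

theorem Finset.sum_filter_exists_le {α β M : Type*} [AddCommMonoid M] [PartialOrder M]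
    [IsOrderedAddMonoid M] {s : Finset α} {f : α → M} (hf : ∀ a ∈ s, 0 ≤ f a)
    (t : Finset β) (P : β → α → Prop) [∀ b, DecidablePred (P b)] :
    ∑ a ∈ s with ∃ b ∈ t, P b a, f a ≤ ∑ b ∈ t, ∑ a ∈ s with P b a, f a := by
  classical
  induction t using Finset.induction_on with
  | empty => simp
  | insert b t hb ih =>
    set u := {a ∈ s | P b a}
    set v := {a ∈ s | ∃ b' ∈ t, P b' a}
    have hunion : {a ∈ s | ∃ b' ∈ insert b t, P b' a} = u ∪ v := by
      rw [← filter_or]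
      simp only [exists_mem_insert]
    have hinter : 0 ≤ ∑ a ∈ u ∩ v, f a :=
      sum_nonneg fun a ha => hf a (mem_filter.1 (mem_of_mem_inter_left ha)).1
    rw [hunion, sum_insert hb]
    calc ∑ a ∈ u ∪ v, f a ≤ ∑ a ∈ u ∪ v, f a + ∑ a ∈ u ∩ v, f a := le_add_of_nonneg_right hinter
      _ = ∑ a ∈ u, f a + ∑ a ∈ v, f a := sum_union_inter
      _ ≤ _ := by gcongr

noncomputable section

section Weights

variable {ι κ : Type*} [Fintype ι] [Fintype κ] (p q : ℝ)

def zeroOneRows (κ : Type*) [Fintype κ] [DecidableEq κ] : Finset (κ → ℝ) :=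
  Fintype.piFinset fun _ => {0, 1}

def zeroOneMatrices (ι κ : Type*) [Fintype ι] [DecidableEq ι] [Fintype κ] [DecidableEq κ] :
    Finset (ι → κ → ℝ) :=
  Fintype.piFinset fun _ => zeroOneRows κ

theorem mem_zeroOneRows [DecidableEq κ] {r : κ → ℝ} :
    r ∈ zeroOneRows κ ↔ ∀ j, r j = 0 ∨ r j = 1 := by
  simp [zeroOneRows]

theorem mem_zeroOneMatrices [DecidableEq ι] [DecidableEq κ] {A : ι → κ → ℝ} :
    A ∈ zeroOneMatrices ι κ ↔ ∀ i j, A i j = 0 ∨ A i j = 1 := by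
  simp [zeroOneMatrices, mem_zeroOneRows]

def rowWeight (r : κ → ℝ) : ℝ := ∏ j, if r j = 1 then p else q

def matrixWeight (A : ι → κ → ℝ) : ℝ := ∏ i, rowWeight p q (A i)

theorem sum_rowWeight_piFinset_vanishing [DecidableEq κ] (S : Finset κ) :
    ∑ r ∈ Fintype.piFinset (fun j => if j ∈ S then {0} else {0, 1}), rowWeight p q r =
      q ^ #S * (p + q) ^ #Sᶜ := by
  have entry (j : κ) : ∑ x ∈ (if j ∈ S then {0} else {0, 1} : Finset ℝ),
      (if x = 1 then p else q) = if j ∈ S then q else p + q := by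
    split_ifs <;> simp [add_comm]
  simp only [rowWeight]
  rw [← prod_univ_sum (fun j => if j ∈ S then {0} else {0, 1}) fun _ x => if x = 1 then p else q]
  simp only [entry, prod_ite, prod_const, filter_mem_eq_inter, univ_inter, filter_not,
    compl_eq_univ_sdiff]

theorem rowWeight_zero : rowWeight p q (0 : κ → ℝ) = q ^ Fintype.card κ := by
  simp [rowWeight]

theorem sum_rowWeight_zeroOneRows [DecidableEq κ] :
    ∑ r ∈ zeroOneRows κ, rowWeight p q r = (p + q) ^ Fintype.card κ := by
  simpa [zeroOneRows] using sum_rowWeight_piFinset_vanishing (κ := κ) p q ∅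

theorem sum_rowWeight_zeroOneRows_ne_zero [DecidableEq κ] :
    ∑ r ∈ (zeroOneRows κ).erase 0, rowWeight p q r =
      (p + q) ^ Fintype.card κ - q ^ Fintype.card κ := by
  have h0 : (0 : κ → ℝ) ∈ zeroOneRows κ := by simp [mem_zeroOneRows]
  rw [← sum_rowWeight_zeroOneRows, ← add_sum_erase _ _ h0, rowWeight_zero, add_sub_cancel_left]

theorem sum_rowWeight_zeroOneRows_apply_eq_zero [DecidableEq κ] (j : κ) :
    ∑ r ∈ zeroOneRows κ with r j = 0, rowWeight p q r =
      q * (p + q) ^ (Fintype.card κ - 1) := by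
  have hrows : {r ∈ zeroOneRows κ | r j = 0} =
      Fintype.piFinset (fun j' => if j' ∈ ({j} : Finset κ) then {0} else {0, 1}) := by
    ext r
    simp only [mem_filter, mem_zeroOneRows, Fintype.mem_piFinset, mem_singleton]
    refine ⟨fun ⟨hr, hj⟩ j' => ?_, fun hr => ⟨fun j' => ?_, by simpa using hr j⟩⟩
    · split_ifs with h
      · simp [h, hj]
      · simpa [or_comm] using hr j'
    · have := hr j'
      split_ifs at this <;> simp_all
  rw [hrows, sum_rowWeight_piFinset_vanishing, card_compl, card_singleton, pow_one]

theorem sum_matrixWeight_piFinset [DecidableEq ι] (T : ι → Finset (κ → ℝ)) :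
    ∑ A ∈ Fintype.piFinset T, matrixWeight p q A = ∏ i, ∑ r ∈ T i, rowWeight p q r :=
  (prod_univ_sum T fun _ r => rowWeight p q r).symm

theorem matrixWeight_swap (A : ι → κ → ℝ) :
    matrixWeight p q (Function.swap A) = matrixWeight p q A :=
  prod_comm

theorem matrixWeight_nonneg {p q : ℝ} (hp : 0 ≤ p) (hq : 0 ≤ q) (A : ι → κ → ℝ) :
    0 ≤ matrixWeight p q A :=
  prod_nonneg fun _ _ => prod_nonneg fun _ _ => by split_ifs <;> assumption

variable [DecidableEq ι] [DecidableEq κ]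

theorem sum_matrixWeight_zeroOneMatrices :
    ∑ A ∈ zeroOneMatrices ι κ, matrixWeight p q A =
      ((p + q) ^ Fintype.card κ) ^ Fintype.card ι := by
  rw [zeroOneMatrices, sum_matrixWeight_piFinset]
  simp [sum_rowWeight_zeroOneRows]

theorem sum_matrixWeight_not_exists_row_eq_zero :
    ∑ A ∈ zeroOneMatrices ι κ with ¬∃ i, A i = 0, matrixWeight p q A =
      ((p + q) ^ Fintype.card κ - q ^ Fintype.card κ) ^ Fintype.card ι := by
  have hmat : {A ∈ zeroOneMatrices ι κ | ¬∃ i, A i = 0} =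
      Fintype.piFinset fun _ => (zeroOneRows κ).erase 0 := by
    ext A
    simp [zeroOneMatrices, forall_and, and_comm]
  rw [hmat, sum_matrixWeight_piFinset]
  simp [sum_rowWeight_zeroOneRows_ne_zero]

theorem swap_mem_zeroOneMatrices {A : ι → κ → ℝ} :
    Function.swap A ∈ zeroOneMatrices κ ι ↔ A ∈ zeroOneMatrices ι κ := by
  simp only [mem_zeroOneMatrices, Function.swap]
  exact forall_comm

theorem sum_matrixWeight_not_exists_col_eq_zero :
    ∑ A ∈ zeroOneMatrices ι κ with ¬∃ j, Function.swap A j = 0, matrixWeight p q A =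
      ((p + q) ^ Fintype.card ι - q ^ Fintype.card ι) ^ Fintype.card κ := by
  rw [← sum_matrixWeight_not_exists_row_eq_zero]
  refine sum_nbij' Function.swap Function.swap ?_ ?_ (fun _ _ => rfl) (fun _ _ => rfl)
    fun A _ => (matrixWeight_swap p q A).symm
  all_goals
    intro A
    simp [swap_mem_zeroOneMatrices]

theorem sum_matrixWeight_row_eq_zero_and_col_eq_zero (i : ι) (j : κ) :
    ∑ A ∈ zeroOneMatrices ι κ with A i = 0 ∧ Function.swap A j = 0, matrixWeight p q A =
      q ^ Fintype.card κ * (q * (p + q) ^ (Fintype.card κ - 1)) ^ (Fintype.card ι - 1) := by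
  have hmat : {A ∈ zeroOneMatrices ι κ | A i = 0 ∧ Function.swap A j = 0} =
      Fintype.piFinset fun i' => if i' = i then {0} else {r ∈ zeroOneRows κ | r j = 0} := by
    ext A
    simp only [mem_filter, mem_zeroOneMatrices, Fintype.mem_piFinset, funext_iff,
      Function.swap, Pi.zero_apply]
    refine ⟨fun ⟨hA, hi, hj⟩ i' => ?_, fun hA => ?_⟩
    · split_ifs with h
      · subst h; simpa [funext_iff] using hi
      · exact mem_filter.2 ⟨mem_zeroOneRows.2 (hA i'), hj i'⟩
    · have hi : ∀ j', A i j' = 0 := by simpa [funext_iff] using hA i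
      have hrow (i') (h : i' ≠ i) : A i' ∈ zeroOneRows κ ∧ A i' j = 0 := by
        simpa [h] using hA i'
      refine ⟨fun i' j' => ?_, hi, fun i' => ?_⟩ <;> by_cases h : i' = i
      · simp [h, hi]
      · exact mem_zeroOneRows.1 (hrow i' h).1 j'
      · simp [h, hi]
      · exact (hrow i' h).2
  rw [hmat, sum_matrixWeight_piFinset]
  simp only [apply_ite (fun t : Finset (κ → ℝ) => ∑ r ∈ t, rowWeight p q r), sum_singleton,
    rowWeight_zero, sum_rowWeight_zeroOneRows_apply_eq_zero]
  rw [← mul_prod_erase _ _ (mem_univ i), if_pos rfl]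
  congr 1
  rw [prod_congr rfl fun i' hi' => if_neg (ne_of_mem_erase hi'), prod_const,
    card_erase_of_mem (mem_univ _), card_univ]

theorem sum_matrixWeight_exists_row_and_col_eq_zero_le {p q : ℝ} (hp : 0 ≤ p) (hq : 0 ≤ q) :
    ∑ A ∈ zeroOneMatrices ι κ with (∃ i, A i = 0) ∧ ∃ j, Function.swap A j = 0,
        matrixWeight p q A ≤
      Fintype.card ι * Fintype.card κ *
        (q ^ Fintype.card κ * (q * (p + q) ^ (Fintype.card κ - 1)) ^ (Fintype.card ι - 1)) := by
  have hcross : {A ∈ zeroOneMatrices ι κ | (∃ i, A i = 0) ∧ ∃ j, Function.swap A j = 0} =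
      {A ∈ zeroOneMatrices ι κ |
        ∃ ij ∈ (univ : Finset (ι × κ)), A ij.1 = 0 ∧ Function.swap A ij.2 = 0} :=
    filter_congr fun A _ => by simp
  rw [hcross]
  have key := sum_filter_exists_le (s := zeroOneMatrices ι κ) (f := matrixWeight p q)
    (fun A _ => matrixWeight_nonneg hp hq A) (univ : Finset (ι × κ))
    fun ij A => A ij.1 = 0 ∧ Function.swap A ij.2 = 0
  refine key.trans_eq ?_
  simp only [sum_matrixWeight_row_eq_zero_and_col_eq_zero, sum_const, card_univ,
    Fintype.card_prod, nsmul_eq_mul, Nat.cast_mul]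

theorem sum_matrixWeight_exists_row_or_col_eq_zero_ge {p : ℝ} (hp : 0 ≤ p) (hp1 : p ≤ 1) :
    (1 - (1 - (1 - p) ^ Fintype.card κ) ^ Fintype.card ι) +
        (1 - (1 - (1 - p) ^ Fintype.card ι) ^ Fintype.card κ) -
        Fintype.card ι * Fintype.card κ *
          ((1 - p) ^ Fintype.card κ * (1 - p) ^ (Fintype.card ι - 1)) ≤
      ∑ A ∈ zeroOneMatrices ι κ with (∃ i, A i = 0) ∨ ∃ j, Function.swap A j = 0,
        matrixWeight p (1 - p) A := by
  have hpq : p + (1 - p) = 1 := by ring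
  have htotal : ∑ A ∈ zeroOneMatrices ι κ, matrixWeight p (1 - p) A = 1 := by
    simp [sum_matrixWeight_zeroOneMatrices, hpq]
  have hrow : ∑ A ∈ zeroOneMatrices ι κ with ∃ i, A i = 0, matrixWeight p (1 - p) A =
      1 - (1 - (1 - p) ^ Fintype.card κ) ^ Fintype.card ι := by
    have hsplit := sum_filter_add_sum_filter_not (zeroOneMatrices ι κ) (fun A => ∃ i, A i = 0)
      (matrixWeight p (1 - p))
    rw [htotal, sum_matrixWeight_not_exists_row_eq_zero, hpq, one_pow] at hsplit
    linarith
  have hcol : ∑ A ∈ zeroOneMatrices ι κ with ∃ j, Function.swap A j = 0,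
      matrixWeight p (1 - p) A = 1 - (1 - (1 - p) ^ Fintype.card ι) ^ Fintype.card κ := by
    have hsplit := sum_filter_add_sum_filter_not (zeroOneMatrices ι κ)
      (fun A => ∃ j, Function.swap A j = 0) (matrixWeight p (1 - p))
    rw [htotal, sum_matrixWeight_not_exists_col_eq_zero, hpq, one_pow] at hsplit
    linarith
  have hboth := sum_matrixWeight_exists_row_and_col_eq_zero_le (ι := ι) (κ := κ) hp
    (sub_nonneg.2 hp1)
  rw [hpq, one_pow, mul_one, filter_and] at hboth
  rw [filter_or, ← hrow, ← hcol, ← sum_union_inter]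
  linarith

theorem matrixWeight_eq_pow_mul_pow {A : ι → κ → ℝ} (hA : A ∈ zeroOneMatrices ι κ) :
    matrixWeight p q A =
      p ^ #{ij : ι × κ | A ij.1 ij.2 = 1} * q ^ #{ij : ι × κ | A ij.1 ij.2 = 0} := by
  have hA' (ij : ι × κ) : A ij.1 ij.2 ≠ 1 ↔ A ij.1 ij.2 = 0 := by
    rcases mem_zeroOneMatrices.1 hA ij.1 ij.2 with h | h <;> simp [h]
  simp only [matrixWeight, rowWeight]
  rw [← Fintype.prod_prod_type' fun i j => if A i j = 1 then p else q, prod_ite,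
    prod_const, prod_const, filter_congr fun ij _ => hA' ij]

end Weights

section Measure

variable {Ω : Type*} [MeasurableSpace Ω] {μ : Measure Ω} {n : ℕ}
  {M : Ω → Matrix (Fin n) (Fin n) ℝ} {p : ℝ}

theorem IsBernoulliMatrix.apply_mem_zeroOneMatrices (hM : IsBernoulliMatrix μ M p) (ω : Ω) :
    M ω ∈ zeroOneMatrices (Fin n) (Fin n) :=
  mem_zeroOneMatrices.2 (hM.1 ω)

theorem IsBernoulliMatrix.measure_eq_ofReal_matrixWeight (hM : IsBernoulliMatrix μ M p)
    {A : Matrix (Fin n) (Fin n) ℝ} (hA : A ∈ zeroOneMatrices (Fin n) (Fin n)) :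
    μ {ω | M ω = A} = ENNReal.ofReal (matrixWeight p (1 - p) A) := by
  rw [hM.2 A (mem_zeroOneMatrices.1 hA), matrixWeight_eq_pow_mul_pow _ _ hA]

theorem IsBernoulliMatrix.measure_mem_le (hM : IsBernoulliMatrix μ M p) (hp : 0 ≤ p) (hp1 : p ≤ 1)
    {s : Finset (Fin n → Fin n → ℝ)} (hs : s ⊆ zeroOneMatrices (Fin n) (Fin n)) :
    μ {ω | M ω ∈ s} ≤ ENNReal.ofReal (∑ A ∈ s, matrixWeight p (1 - p) A) := by
  have hcover : {ω | M ω ∈ s} ⊆ ⋃ A ∈ s, {ω | M ω = A} := fun ω hω => Set.mem_biUnion hω rfl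
  calc μ {ω | M ω ∈ s}
      ≤ ∑ A ∈ s, μ {ω | M ω = A} := (measure_mono hcover).trans (measure_biUnion_finset_le _ _)
    _ = ∑ A ∈ s, ENNReal.ofReal (matrixWeight p (1 - p) A) :=
        sum_congr rfl fun A hA => hM.measure_eq_ofReal_matrixWeight (hs hA)
    _ = _ := (ENNReal.ofReal_sum_of_nonneg fun A _ =>
        matrixWeight_nonneg hp (sub_nonneg.2 hp1) A).symm

theorem IsBernoulliMatrix.sum_matrixWeight_le_measure [IsProbabilityMeasure μ]
    (hM : IsBernoulliMatrix μ M p) (hp : 0 ≤ p) (hp1 : p ≤ 1) (Q : (Fin n → Fin n → ℝ) → Prop)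
    [DecidablePred Q] :
    ∑ A ∈ zeroOneMatrices (Fin n) (Fin n) with Q A, matrixWeight p (1 - p) A ≤
      (μ {ω | Q (M ω)}).toReal := by
  have htotal := sum_filter_add_sum_filter_not (zeroOneMatrices (Fin n) (Fin n)) Q
    (matrixWeight p (1 - p))
  rw [sum_matrixWeight_zeroOneMatrices, add_sub_cancel, one_pow, one_pow] at htotal
  have hcompl : {ω | Q (M ω)}ᶜ ⊆ {ω | M ω ∈ {A ∈ zeroOneMatrices (Fin n) (Fin n) | ¬Q A}} :=
    fun ω hω => mem_filter.2 ⟨hM.apply_mem_zeroOneMatrices ω, hω⟩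
  have hone : (1 : ENNReal) ≤ μ {ω | Q (M ω)} + ENNReal.ofReal
      (∑ A ∈ zeroOneMatrices (Fin n) (Fin n) with ¬Q A, matrixWeight p (1 - p) A) :=
    measure_univ (μ := μ) ▸ (measure_univ_le_add_compl _).trans
      (add_le_add le_rfl
        ((measure_mono hcompl).trans (hM.measure_mem_le hp hp1 (filter_subset _ _))))
  have hreal := ENNReal.toReal_mono (by finiteness) hone
  rw [ENNReal.toReal_add (measure_ne_top _ _) ENNReal.ofReal_ne_top, ENNReal.toReal_ofReal
    (sum_nonneg fun A _ => matrixWeight_nonneg hp (sub_nonneg.2 hp1) A), ENNReal.toReal_one]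
    at hreal
  linarith

end Measure

end

/-- Lower bound on the probability that a Bernoulli(p) matrix contains a zero row or column. -/
theorem zero_row_or_column_lower_bound :
    ∀ n : ℕ, 1 < n → ∀ p : ℝ, p ∈ Set.Ioo (0 : ℝ) 1 →
      ∀ (Ω : Type) [MeasurableSpace Ω] (μ : Measure Ω), IsProbabilityMeasure μ →
        ∀ M : Ω → Matrix (Fin n) (Fin n) ℝ, IsBernoulliMatrix μ M p →
          2 - 2 * (1 - (1 - p) ^ n) ^ n - 4 * (n : ℝ) ^ 2 * (1 - p) ^ (2 * n - 1) ≤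
            (μ {ω | (∃ i, ∀ j, M ω i j = 0) ∨ (∃ j, ∀ i, M ω i j = 0)}).toReal := by
  intro n hn p ⟨hp, hp1⟩ Ω _ μ _ M hM
  have hevent : {ω | (∃ i, ∀ j, M ω i j = 0) ∨ (∃ j, ∀ i, M ω i j = 0)} =
      {ω | (∃ i, M ω i = 0) ∨ ∃ j, Function.swap (M ω) j = 0} := by
    simp [funext_iff, Function.swap]
  have hweight :=
    sum_matrixWeight_exists_row_or_col_eq_zero_ge (ι := Fin n) (κ := Fin n) hp.le hp1.le
  have hmeasure := hM.sum_matrixWeight_le_measure hp.le hp1.le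
    fun A => (∃ i, A i = 0) ∨ ∃ j, Function.swap A j = 0
  have hexp : (1 - p) ^ n * (1 - p) ^ (n - 1) = (1 - p) ^ (2 * n - 1) := by
    rw [← pow_add]
    congr 1
    omega
  have hnonneg : 0 ≤ (n : ℝ) ^ 2 * (1 - p) ^ (2 * n - 1) := by
    have := sub_nonneg.2 hp1.le
    positivity
  rw [Fintype.card_fin, hexp] at hweight
  rw [hevent]
  -- The two sums differ only in their `Decidable` instances: `Fin n` has its own.
  nlinarith [hweight.trans ((by congr! : _ = _).trans_le hmeasure)]
end

section
/- Let n ≥ 1 and δ, ρ, r ∈ (0,1). Set k = ⌈δn⌉ and m = ⌊rn⌋, and assume n ≥ 2m > 4k. Let x ∈ Υ_n(r) be such that there do NOT exist subsets Q₁, Q₂ ⊆ {1,…,n} with |Q₁|, |Q₂| ≥ δn and max_{i∈Q₂} x_i ≤ min_{i∈Q₁} x_i − ρ. Then there exist a set A ⊆ {1,…,n} with |A| > n − m and a real number λ with |λ| = 1 such that |x_i − λ| < ρ for every i ∈ A. -/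
/-!
Since the `m`-th largest `|x i|` equals `1` (with `m = ⌊rn⌋`), at least `m` coordinates have
`|x i| ≥ 1` and fewer than `m` have `|x i| > 1`. As `m > 2k`, more than `k` coordinates satisfy
`λ x i ≥ 1` for a suitable sign `λ = ±1`, while more than `n - m ≥ m > k` satisfy `|x i| ≤ 1`,
hence `λ x i ≤ 1`. So both `{x i ≥ λ}` and `{x i ≤ λ}` have at least `δn` elements; if no
pair `Q₁, Q₂` exists, then fewer than `δn` coordinates lie below `λ - ρ` and fewer than `δn` above
`λ + ρ`, so fewer than `2k < m` coordinates are `ρ`-far from `λ`.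
-/

/-- The `k`-th largest value of `(|x i|)_i` (one-indexed, for `1 ≤ k ≤ n`). -/
noncomputable def ordStat {n : ℕ} (x : Fin n → ℝ) (k : ℕ) : ℝ :=
  sSup {t : ℝ | k ≤ (Finset.univ.filter fun i => t ≤ |x i|).card}

open Finset Filter Topology

section OrdStat

variable {n : ℕ} (x : Fin n → ℝ) {m : ℕ}

lemma bddAbove_setOf_le_card_filter_le_abs (hm : 0 < m) :
    BddAbove {t : ℝ | m ≤ #{i | t ≤ |x i|}} := by
  refine ⟨∑ i, |x i|, fun t ht => ?_⟩
  obtain ⟨i, hi⟩ := card_pos.1 (hm.trans_le ht)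
  exact (mem_filter.1 hi).2.trans (single_le_sum (fun j _ => abs_nonneg (x j)) (mem_univ i))

/- There are finitely many coordinates, so thresholds slightly above (below) `ordStat x m` select
the same coordinates as `ordStat x m` itself with `<` (`≤`). -/
lemma card_filter_ordStat_lt_abs_lt (hm : 0 < m) : #{i | ordStat x m < |x i|} < m := by
  have hev : ∀ᶠ u in 𝓝[>] ordStat x m, ∀ i, ordStat x m < |x i| → u ≤ |x i| :=
    eventually_all.2 fun i => eventually_imp_distrib_left.2 fun h =>
      (eventually_nhdsWithin_of_eventually_nhds (eventually_lt_nhds h)).mono fun _ => le_of_lt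
  obtain ⟨u, hu, hgt⟩ := (hev.and self_mem_nhdsWithin).exists
  by_contra! h
  have hmem : u ∈ {t : ℝ | m ≤ #{i | t ≤ |x i|}} :=
    h.trans (card_le_card fun i => by simpa only [mem_filter, mem_univ, true_and] using hu i)
  exact (le_csSup (bddAbove_setOf_le_card_filter_le_abs x hm) hmem).not_gt hgt

lemma le_card_filter_ordStat_le_abs (hmn : m ≤ n) : m ≤ #{i | ordStat x m ≤ |x i|} := by
  have hev : ∀ᶠ u in 𝓝[<] ordStat x m, ∀ i, |x i| < ordStat x m → |x i| < u :=
    eventually_all.2 fun i => eventually_imp_distrib_left.2 fun h =>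
      eventually_nhdsWithin_of_eventually_nhds (eventually_gt_nhds h)
  obtain ⟨u, hu, hlt⟩ := (hev.and self_mem_nhdsWithin).exists
  have hne : ({t : ℝ | m ≤ #{i | t ≤ |x i|}}).Nonempty := ⟨0, by simpa using hmn⟩
  obtain ⟨s, hs, hus⟩ := exists_lt_of_lt_csSup hne hlt
  refine hs.trans (card_le_card fun i => ?_)
  simp only [mem_filter, mem_univ, true_and]
  exact fun hsi => not_lt.1 fun hi => (hu i hi).not_ge (hus.le.trans hsi)

end OrdStat

def IsEssNonconstant {ι : Type*} (x : ι → ℝ) (d ρ : ℝ) : Prop :=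
  ∃ Q₁ Q₂ : Finset ι, d ≤ #Q₁ ∧ d ≤ #Q₂ ∧ ∀ i ∈ Q₁, ∀ j ∈ Q₂, x j ≤ x i - ρ

section EssNonconstant

variable {ι : Type*} [Fintype ι] {x : ι → ℝ} {c d ρ : ℝ}

lemma card_filter_le_sub_lt (hx : ¬ IsEssNonconstant x d ρ) (hup : d ≤ #{i | c ≤ x i}) :
    (#{i | x i ≤ c - ρ} : ℝ) < d := by
  by_contra! h
  refine hx ⟨_, _, hup, h, fun i hi j hj => ?_⟩
  simp only [mem_filter, mem_univ, true_and] at hi hj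
  linarith

lemma card_filter_add_le_lt (hx : ¬ IsEssNonconstant x d ρ) (hdown : d ≤ #{i | x i ≤ c}) :
    (#{i | c + ρ ≤ x i} : ℝ) < d := by
  by_contra! h
  refine hx ⟨_, _, h, hdown, fun i hi j hj => ?_⟩
  simp only [mem_filter, mem_univ, true_and] at hi hj
  linarith

lemma card_filter_le_abs_sub_lt (hx : ¬ IsEssNonconstant x d ρ) (hup : d ≤ #{i | c ≤ x i})
    (hdown : d ≤ #{i | x i ≤ c}) : (#{i | ρ ≤ |x i - c|} : ℝ) < 2 * d := by
  classical
  have hsub : ({i | ρ ≤ |x i - c|} : Finset ι) ⊆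
      ({i | x i ≤ c - ρ} : Finset ι) ∪ ({i | c + ρ ≤ x i} : Finset ι) := by
    intro i
    simp only [mem_union, mem_filter, mem_univ, true_and, le_abs']
    rintro (h | h)
    · exact Or.inl (by linarith)
    · exact Or.inr (by linarith)
  have hcard : (#{i | ρ ≤ |x i - c|} : ℝ) ≤ #{i | x i ≤ c - ρ} + #{i | c + ρ ≤ x i} := by
    exact_mod_cast (card_le_card hsub).trans (card_union_le _ _)
  linarith [card_filter_le_sub_lt hx hup, card_filter_add_le_lt hx hdown]

end EssNonconstant

lemma exists_abs_eq_lt_card_filter_le_and_ge {ι : Type*} [Fintype ι] (x : ι → ℝ) {a : ℝ}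
    (ha : 0 ≤ a) {k : ℕ} (hfar : 2 * k < #{i | a ≤ |x i|}) (hnear : k < #{i | |x i| ≤ a}) :
    ∃ c : ℝ, |c| = a ∧ k < #{i | c ≤ x i} ∧ k < #{i | x i ≤ c} := by
  classical
  have hsplit : #{i | a ≤ |x i|} ≤ #{i | a ≤ x i} + #{i | x i ≤ -a} := by
    refine (card_le_card fun i => ?_).trans (card_union_le _ _)
    simp only [mem_union, mem_filter, mem_univ, true_and, le_abs', or_comm]
    exact id
  rcases lt_or_ge k #{i | a ≤ x i} with hpos | hpos
  · refine ⟨a, abs_of_nonneg ha, hpos, hnear.trans_le (card_le_card fun i => ?_)⟩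
    simp only [mem_filter, mem_univ, true_and]
    exact fun h => (abs_le.1 h).2
  · refine ⟨-a, by rw [abs_neg, abs_of_nonneg ha], hnear.trans_le (card_le_card fun i => ?_), ?_⟩
    · simp only [mem_filter, mem_univ, true_and]
      exact fun h => (abs_le.1 h).1
    · omega

/-- A vector in `Υ_n(r)` which is not essentially non-constant is almost constant. -/
theorem almost_constant_of_not_nonconstant :
    ∀ n : ℕ, 1 ≤ n → ∀ δ ρ r : ℝ,
      δ ∈ Set.Ioo (0 : ℝ) 1 → ρ ∈ Set.Ioo (0 : ℝ) 1 → r ∈ Set.Ioo (0 : ℝ) 1 →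
      2 * ⌊r * (n : ℝ)⌋₊ ≤ n → 4 * ⌈δ * (n : ℝ)⌉₊ < 2 * ⌊r * (n : ℝ)⌋₊ →
      ∀ x : Fin n → ℝ, ordStat x ⌊r * (n : ℝ)⌋₊ = 1 →
        (¬ ∃ Q₁ Q₂ : Finset (Fin n), δ * n ≤ Q₁.card ∧ δ * n ≤ Q₂.card ∧
            ∀ i ∈ Q₁, ∀ j ∈ Q₂, x j ≤ x i - ρ) →
        ∃ A : Finset (Fin n), (n : ℕ) - ⌊r * (n : ℝ)⌋₊ < A.card ∧
          ∃ lam : ℝ, |lam| = 1 ∧ ∀ i ∈ A, |x i - lam| < ρ := by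
  intro n _ δ ρ r _ _ _ hmn hkm x hx1 hx
  set m := ⌊r * (n : ℝ)⌋₊
  set k := ⌈δ * (n : ℝ)⌉₊
  have hδk : δ * n ≤ k := Nat.le_ceil _
  have hfar : m ≤ #{i | 1 ≤ |x i|} := hx1 ▸ le_card_filter_ordStat_le_abs x (by omega)
  have hbeyond : #{i | 1 < |x i|} < m := hx1 ▸ card_filter_ordStat_lt_abs_lt x (by omega)
  have hnear : n - m < #{i | |x i| ≤ 1} := by
    have := card_filter_add_card_filter_not (s := univ) (p := fun i => |x i| ≤ 1)
    simp only [not_le, card_univ, Fintype.card_fin] at this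
    omega
  obtain ⟨lam, hlam, hup, hdown⟩ :=
    exists_abs_eq_lt_card_filter_le_and_ge x zero_le_one (k := k) (by omega) (by omega)
  have hfar_lam : #{i | ρ ≤ |x i - lam|} < 2 * k := by
    have : (#{i | ρ ≤ |x i - lam|} : ℝ) < 2 * k :=
      (card_filter_le_abs_sub_lt hx (hδk.trans (by exact_mod_cast hup.le))
        (hδk.trans (by exact_mod_cast hdown.le))).trans_le (by linarith)
    exact_mod_cast this
  refine ⟨({i | |x i - lam| < ρ} : Finset (Fin n)), ?_, lam, hlam, fun i hi => (mem_filter.1 hi).2⟩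
  have := card_filter_add_card_filter_not (s := univ) (p := fun i => |x i - lam| < ρ)
  simp only [not_lt, card_univ, Fintype.card_fin] at this
  omega
end

section
/- For every R ≥ 1 there exists C ≥ 1 depending only on R with the following property. Let n ≥ 1 and p ∈ (0,1) satisfy C·p ≤ 1 and C ≤ p·n, and let M be an n×n Bernoulli(p) random matrix. Then with probability at least 1 − exp(−n/C), the number of indices i ∈ {2,…,n} for which |supp C_i(M)| ∉ [pn/8, 8pn] is at most ⌊(pR)⁻¹⌋. -/
/-!
Everything reduces to finite sums of product weights over 0/1 patterns, since the law of `M`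
gives `μ {M = A}` as a product of Bernoulli weights. An exponential-moment (Chernoff) bound shows
that one column has support size outside `[pn/8, 8pn]` with probability at most
`q = 2 e^{-pn/4}`. The columns are independent, so a second Chernoff bound, with parameter
`t = pn/8`, bounds the probability that more than `m = ⌊(pR)⁻¹⌋` columns are atypical by
`exp (-(m + 1) pn/8 + n e^{pn/8} q) ≤ exp (-n/(8R) + n/(16R))`: here `(m + 1) p ≥ 1/R`, and
`e^{pn/8} ≥ pn/8 ≥ 32R` because `C = 256R ≤ pn`.
-/

open MeasureTheory

open Finset Real

section Chernoff

variable {ι β : Type*} [Fintype ι] [DecidableEq ι] [Fintype β]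

theorem sum_pow_card_filter_mul_prod (v : β → ℝ) (B : β → Prop) [DecidablePred B] (z : ℝ) :
    ∑ g : ι → β, z ^ #{i | B (g i)} * ∏ i, v (g i) =
      (∑ b, (if B b then z else 1) * v b) ^ Fintype.card ι := by
  rw [← card_univ, ← prod_const, Fintype.prod_sum (fun (_ : ι) b => (if B b then z else 1) * v b)]
  refine sum_congr rfl fun g _ => ?_
  rw [prod_mul_distrib, prod_ite, prod_const, prod_const_one, mul_one]

theorem sum_prod_le_exp_of_le_mul_card {v : β → ℝ} (hv : ∀ b, 0 ≤ v b) (hv1 : ∑ b, v b = 1)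
    (B : β → Prop) [DecidablePred B] {t a : ℝ} {S : Finset (ι → β)}
    (hS : ∀ g ∈ S, a ≤ t * #{i | B (g i)}) :
    ∑ g ∈ S, ∏ i, v (g i) ≤
      exp (-a + Fintype.card ι * ((exp t - 1) * ∑ b with B b, v b)) := by
  set q := ∑ b with B b, v b
  have hmgf : ∑ b, (if B b then exp t else 1) * v b = 1 + (exp t - 1) * q := by
    have hsplit : ∀ b, (if B b then exp t else 1) * v b =
        v b + (exp t - 1) * (if B b then v b else 0) := fun b => by split_ifs <;> ring
    rw [sum_congr rfl fun b _ => hsplit b, sum_add_distrib, ← mul_sum, ← sum_filter, hv1]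
  have hprod_nonneg : ∀ g : ι → β, 0 ≤ ∏ i, v (g i) := fun g => prod_nonneg fun i _ => hv _
  calc ∑ g ∈ S, ∏ i, v (g i)
      ≤ ∑ g ∈ S, exp (-a) * (exp t ^ #{i | B (g i)} * ∏ i, v (g i)) := by
        refine sum_le_sum fun g hg => ?_
        rw [← mul_assoc]
        refine le_mul_of_one_le_left (hprod_nonneg g) ?_
        rw [← exp_nat_mul, ← exp_add]
        exact one_le_exp (by linarith [hS g hg, mul_comm t (#{i | B (g i)} : ℝ)])
    _ ≤ exp (-a) * ∑ g : ι → β, exp t ^ #{i | B (g i)} * ∏ i, v (g i) := by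
        rw [← mul_sum]
        gcongr
        · exact fun g _ _ => mul_nonneg (by positivity) (hprod_nonneg g)
        · exact subset_univ S
    _ = exp (-a) * (1 + (exp t - 1) * q) ^ Fintype.card ι := by
        rw [sum_pow_card_filter_mul_prod, hmgf]
    _ ≤ exp (-a) * exp ((exp t - 1) * q) ^ Fintype.card ι := by
        gcongr
        · rw [← hmgf]
          exact sum_nonneg fun b _ => mul_nonneg (by split_ifs <;> positivity) (hv b)
        · linarith [add_one_le_exp ((exp t - 1) * q)]
    _ = _ := by rw [← exp_nat_mul, ← exp_add]

end Chernoff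

def bernoulliWeight (p : ℝ) (b : Bool) : ℝ := if b then p else 1 - p

section Bernoulli

variable {ι : Type*} [Fintype ι] {p : ℝ}

lemma bernoulliWeight_nonneg (hp0 : 0 ≤ p) (hp1 : p ≤ 1) (b : Bool) :
    0 ≤ bernoulliWeight p b := by
  cases b <;> simp [bernoulliWeight, hp0, hp1]

lemma sum_bernoulliWeight (p : ℝ) : ∑ b, bernoulliWeight p b = 1 := by
  simp [bernoulliWeight]

lemma sum_filter_true_bernoulliWeight (p : ℝ) : ∑ b with b = true, bernoulliWeight p b = p := by
  simp [sum_filter, bernoulliWeight]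

def IsAtypicalSupport (p : ℝ) (c : ι → Bool) : Prop :=
  ¬(p * Fintype.card ι / 8 ≤ #{k | c k = true} ∧ (#{k | c k = true} : ℝ) ≤ 8 * p * Fintype.card ι)

noncomputable instance (p : ℝ) : DecidablePred (IsAtypicalSupport (ι := ι) p) :=
  fun _ => inferInstanceAs (Decidable (¬_))

variable [DecidableEq ι]

lemma sum_prod_bernoulliWeight (p : ℝ) : ∑ c : ι → Bool, ∏ k, bernoulliWeight p (c k) = 1 := by
  rw [← Fintype.prod_sum (fun (_ : ι) => bernoulliWeight p)]
  simp only [sum_bernoulliWeight, prod_const_one]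

theorem sum_prod_bernoulliWeight_card_lt (hp0 : 0 ≤ p) (hp1 : p ≤ 1) :
    ∑ c : ι → Bool with (#{k | c k = true} : ℝ) < p * Fintype.card ι / 8,
      ∏ k, bernoulliWeight p (c k) ≤ exp (-(p * Fintype.card ι / 4)) := by
  refine (sum_prod_le_exp_of_le_mul_card (bernoulliWeight_nonneg hp0 hp1)
    (sum_bernoulliWeight p) (· = true) (t := -1) (a := -(p * Fintype.card ι / 8))
    fun c hc => by linarith [(mem_filter.mp hc).2]).trans ?_
  rw [sum_filter_true_bernoulliWeight, exp_le_exp]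
  have hpN : 0 ≤ p * Fintype.card ι := by positivity
  nlinarith [exp_neg_one_lt_half]

theorem sum_prod_bernoulliWeight_lt_card (hp0 : 0 ≤ p) (hp1 : p ≤ 1) :
    ∑ c : ι → Bool with 8 * p * Fintype.card ι < #{k | c k = true},
      ∏ k, bernoulliWeight p (c k) ≤ exp (-(p * Fintype.card ι / 4)) := by
  refine (sum_prod_le_exp_of_le_mul_card (bernoulliWeight_nonneg hp0 hp1)
    (sum_bernoulliWeight p) (· = true) (t := 1) (a := 8 * p * Fintype.card ι)
    fun c hc => by linarith [(mem_filter.mp hc).2]).trans ?_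
  rw [sum_filter_true_bernoulliWeight, exp_le_exp]
  have hpN : 0 ≤ p * Fintype.card ι := by positivity
  nlinarith [exp_one_lt_d9]

theorem sum_prod_bernoulliWeight_isAtypicalSupport (hp0 : 0 ≤ p) (hp1 : p ≤ 1) :
    ∑ c : ι → Bool with IsAtypicalSupport p c, ∏ k, bernoulliWeight p (c k) ≤
      2 * exp (-(p * Fintype.card ι / 4)) := by
  rw [sum_filter]
  calc ∑ c : ι → Bool, (if IsAtypicalSupport p c then ∏ k, bernoulliWeight p (c k) else 0)
      ≤ ∑ c : ι → Bool,
          ((if (#{k | c k = true} : ℝ) < p * Fintype.card ι / 8 then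
              ∏ k, bernoulliWeight p (c k) else 0) +
            if 8 * p * Fintype.card ι < #{k | c k = true} then
              ∏ k, bernoulliWeight p (c k) else 0) := by
        refine sum_le_sum fun c _ => ?_
        have := prod_nonneg fun k (_ : k ∈ univ) => bernoulliWeight_nonneg hp0 hp1 (c k)
        simp only [IsAtypicalSupport, not_and_or, not_le]
        split_ifs <;> first | linarith | tauto
    _ ≤ 2 * exp (-(p * Fintype.card ι / 4)) := by
        rw [sum_add_distrib, ← sum_filter, ← sum_filter, two_mul]
        exact add_le_add (sum_prod_bernoulliWeight_card_lt hp0 hp1)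
          (sum_prod_bernoulliWeight_lt_card hp0 hp1)

end Bernoulli

theorem sum_prod_bernoulliWeight_floor_lt_card_isAtypicalSupport {ι : Type*} [Fintype ι]
    [DecidableEq ι] {p R : ℝ} (hR : 1 ≤ R) (hp0 : 0 < p) (hp1 : p ≤ 1)
    (hpN : 256 * R ≤ p * Fintype.card ι) :
    ∑ g : ι → ι → Bool with ⌊(p * R)⁻¹⌋₊ < #{i | IsAtypicalSupport p (g i)},
      ∏ i, ∏ k, bernoulliWeight p (g i k) ≤ exp (-(Fintype.card ι / (256 * R))) := by
  set N : ℝ := (Fintype.card ι : ℝ)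
  set m := ⌊(p * R)⁻¹⌋₊
  set q := ∑ c : ι → Bool with IsAtypicalSupport p c, ∏ k, bernoulliWeight p (c k)
  have hR0 : 0 < R := by linarith
  have hpN0 : 0 < p * N := by linarith
  refine (sum_prod_le_exp_of_le_mul_card
    (fun c => prod_nonneg fun k _ => bernoulliWeight_nonneg hp0.le hp1 (c k))
    (sum_prod_bernoulliWeight p) (IsAtypicalSupport p) (t := p * N / 8)
    (a := (m + 1) * (p * N / 8)) fun g hg => ?_).trans ?_
  · have hlt : m < #{i | IsAtypicalSupport p (g i)} := (mem_filter.mp hg).2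
    have hle : (m + 1 : ℝ) ≤ #{i | IsAtypicalSupport p (g i)} := by exact_mod_cast hlt
    nlinarith
  rw [exp_le_exp]
  have hq : q ≤ 2 * exp (-(p * N / 4)) := sum_prod_bernoulliWeight_isAtypicalSupport hp0.le hp1
  have hq0 : 0 ≤ q :=
    sum_nonneg fun c _ => prod_nonneg fun k _ => bernoulliWeight_nonneg hp0.le hp1 (c k)
  have hm : R⁻¹ ≤ (m + 1) * p := by
    calc R⁻¹ = (p * R)⁻¹ * p := by field_simp
      _ ≤ (m + 1) * p := by gcongr; exact (Nat.lt_floor_add_one _).le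
  have hexp : (exp (p * N / 8) - 1) * q ≤ R⁻¹ / 16 := by
    have hx : exp (-(p * N / 8)) ≤ (p * N / 8)⁻¹ := by
      rw [exp_neg]
      exact inv_anti₀ (by positivity) (by linarith [add_one_le_exp (p * N / 8)])
    calc (exp (p * N / 8) - 1) * q ≤ exp (p * N / 8) * (2 * exp (-(p * N / 4))) := by
          gcongr; linarith
      _ = 2 * exp (-(p * N / 8)) := by rw [mul_left_comm, ← exp_add]; ring_nf
      _ ≤ 2 * (p * N / 8)⁻¹ := by gcongr
      _ ≤ 2 * (256 * R / 8)⁻¹ := by gcongr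
      _ = R⁻¹ / 16 := by field_simp; ring
  calc -((m + 1) * (p * N / 8)) + N * ((exp (p * N / 8) - 1) * q)
      ≤ -(R⁻¹ * N / 8) + N * (R⁻¹ / 16) := by gcongr; nlinarith
    _ ≤ -(N / (256 * R)) := by
        rw [div_mul_eq_div_div_swap, div_eq_mul_inv N R]
        nlinarith [inv_pos.mpr hR0]

section SupportPattern

variable {κ ι : Type*}

/-- `supportPattern A i` is the indicator vector of `supp C_i(A)`. -/
noncomputable def supportPattern (A : Matrix κ ι ℝ) (i : ι) (k : κ) : Bool := decide (A k i ≠ 0)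

/-- Column `i` of `patternMatrix g` is the 0/1 vector `g i`. -/
def patternMatrix (g : ι → κ → Bool) : Matrix κ ι ℝ := Matrix.of fun k i => if g i k then 1 else 0

lemma patternMatrix_supportPattern {A : Matrix κ ι ℝ} (hA : ∀ k i, A k i = 0 ∨ A k i = 1) :
    patternMatrix (supportPattern A) = A := by
  ext k i
  rcases hA k i with h | h <;> simp [patternMatrix, supportPattern, h]

lemma patternMatrix_eq_zero_or_eq_one (g : ι → κ → Bool) (k : κ) (i : ι) :
    patternMatrix g k i = 0 ∨ patternMatrix g k i = 1 := by
  cases g i k <;> simp [patternMatrix, *]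

lemma pow_card_mul_pow_card_patternMatrix [Fintype κ] [Fintype ι] (p : ℝ) (g : ι → κ → Bool) :
    p ^ #{ki : κ × ι | patternMatrix g ki.1 ki.2 = 1} *
        (1 - p) ^ #{ki : κ × ι | patternMatrix g ki.1 ki.2 = 0} =
      ∏ i, ∏ k, bernoulliWeight p (g i k) := by
  have h1 : univ.filter (fun ki : κ × ι => patternMatrix g ki.1 ki.2 = 1) =
      univ.filter (fun ki : κ × ι => g ki.2 ki.1 = true) :=
    filter_congr fun ki _ => by cases h : g ki.2 ki.1 <;> simp [patternMatrix, h]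
  have h0 : univ.filter (fun ki : κ × ι => patternMatrix g ki.1 ki.2 = 0) =
      univ.filter (fun ki : κ × ι => ¬g ki.2 ki.1 = true) :=
    filter_congr fun ki _ => by cases h : g ki.2 ki.1 <;> simp [patternMatrix, h]
  rw [h1, h0, ← prod_const, ← prod_const, ← prod_ite, Fintype.prod_prod_type_right]
  rfl

end SupportPattern

theorem IsBernoulliMatrix.measure_supportPattern_le {Ω : Type*} [MeasurableSpace Ω]
    {μ : Measure Ω} {n : ℕ} {M : Ω → Matrix (Fin n) (Fin n) ℝ} {p : ℝ}
    (hM : IsBernoulliMatrix μ M p) (hp0 : 0 ≤ p) (hp1 : p ≤ 1)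
    (P : (Fin n → Fin n → Bool) → Prop) [DecidablePred P] :
    μ {ω | P (supportPattern (M ω))} ≤
      ENNReal.ofReal (∑ g with P g, ∏ i, ∏ k, bernoulliWeight p (g i k)) := by
  calc μ {ω | P (supportPattern (M ω))}
      ≤ μ (⋃ g ∈ univ.filter P, {ω | M ω = patternMatrix g}) := by
        refine measure_mono fun ω hω => Set.mem_biUnion (mem_filter.mpr ⟨mem_univ _, hω⟩) ?_
        exact (patternMatrix_supportPattern (hM.1 ω)).symm
    _ ≤ ∑ g with P g, μ {ω | M ω = patternMatrix g} := measure_biUnion_finset_le _ _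
    _ = ∑ g with P g, ENNReal.ofReal (∏ i, ∏ k, bernoulliWeight p (g i k)) := by
        refine sum_congr rfl fun g _ => ?_
        rw [hM.2 _ (patternMatrix_eq_zero_or_eq_one g), pow_card_mul_pow_card_patternMatrix]
    _ = _ := (ENNReal.ofReal_sum_of_nonneg fun g _ =>
        prod_nonneg fun i _ => prod_nonneg fun k _ => bernoulliWeight_nonneg hp0 hp1 _).symm

lemma one_sub_le_toReal_measure_of_measure_compl_le {Ω : Type*} [MeasurableSpace Ω]
    {μ : Measure Ω} [IsProbabilityMeasure μ] {s : Set Ω} {ε : ℝ} (hε : 0 ≤ ε)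
    (h : μ sᶜ ≤ ENNReal.ofReal ε) : 1 - ε ≤ (μ s).toReal := by
  have hle : 1 ≤ μ s + ENNReal.ofReal ε :=
    measure_univ (μ := μ) ▸ (measure_univ_le_add_compl s).trans (add_le_add_right h _)
  have := ENNReal.toReal_mono (by finiteness) hle
  rw [ENNReal.toReal_add (measure_ne_top μ s) ENNReal.ofReal_ne_top,
    ENNReal.toReal_ofReal hε, ENNReal.toReal_one] at this
  linarith

/-- With high probability, all but at most `⌊(pR)⁻¹⌋` of the columns `C₂(M), …, C_n(M)`
have support cardinality in `[pn/8, 8pn]`. -/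
theorem column_support_cardinality :
    ∀ R : ℝ, 1 ≤ R → ∃ C : ℝ, 1 ≤ C ∧
      ∀ n : ℕ, 1 ≤ n → ∀ p : ℝ, 0 < p → p < 1 → C * p ≤ 1 → C ≤ p * n →
        ∀ (Ω : Type) [MeasurableSpace Ω] (μ : Measure Ω), IsProbabilityMeasure μ →
          ∀ M : Ω → Matrix (Fin n) (Fin n) ℝ, IsBernoulliMatrix μ M p →
            1 - Real.exp (-((n : ℝ) / C)) ≤
              (μ {ω | ((Finset.univ.filter fun i : Fin n => (i : ℕ) ≠ 0 ∧
                  ¬(p * n / 8 ≤ ((Finset.univ.filter fun k => M ω k i ≠ 0).card : ℝ) ∧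
                    ((Finset.univ.filter fun k => M ω k i ≠ 0).card : ℝ) ≤ 8 * p * n)).card : ℕ)
                  ≤ ⌊(p * R)⁻¹⌋₊}).toReal := by
  intro R hR
  refine ⟨256 * R, by linarith, ?_⟩
  intro n _ p hp0 hp1 _ hpn Ω _ μ _ M hM
  refine one_sub_le_toReal_measure_of_measure_compl_le (exp_pos _).le ?_
  calc _ ≤ μ {ω | ⌊(p * R)⁻¹⌋₊ < #{i | IsAtypicalSupport p (supportPattern (M ω) i)}} := by
        refine measure_mono fun ω hω => ?_
        simp only [Set.mem_compl_iff, Set.mem_ofPred_eq, not_le] at hω ⊢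
        refine hω.trans_le (card_le_card fun i hi => ?_)
        simp_all [IsAtypicalSupport, supportPattern]
    _ ≤ _ := hM.measure_supportPattern_le hp0.le hp1.le
          fun g => ⌊(p * R)⁻¹⌋₊ < #{i | IsAtypicalSupport p (g i)}
    _ ≤ _ := ENNReal.ofReal_le_ofReal <| by
        simpa only [Fintype.card_fin] using
          sum_prod_bernoulliWeight_floor_lt_card_isAtypicalSupport (ι := Fin n) hR hp0 hp1.le
            (by simpa using hpn)
end

section
/- Let r, δ, ρ ∈ (0,1) and let g be a growth function. Let n ≥ 6/r and let A be an n×n random matrix (with arbitrary distribution). Then for every t > 0, P{‖Ax‖ ≤ t·‖x‖ for some x ∈ V_n(r, g, δ, ρ)} ≤ (2/(rn)²)·Σ_{i≠j} P{dist(H_i(A), C_i(A)) ≤ t·b_n and dist(H_j(A), C_j(A)) ≤ t·b_n}, where the sum is over all ordered pairs (i, j) with i ≠ j, and b_n = Σ_{i=1}^n g(i). -/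
/-!
Let `x ∈ V_n(r, g, δ, ρ)` with `‖Ax‖ ≤ t‖x‖`. Since `x*_{⌊rn⌋} = 1`, at least `m = ⌊rn⌋`
coordinates satisfy `|x_i| ≥ 1`. For each of them, `Ax = x_i C_i + Σ_{k ≠ i} x_k C_k` exhibits a
point of `H_i` at distance `‖Ax‖ / |x_i| ≤ t‖x‖` from `C_i`, and
`‖x‖ ≤ Σ_i x*_i ≤ Σ_i g(n/i) ≤ b_n`. Hence on the event, at least `m(m - 1) ≥ (rn)²/2` ordered
pairs `(i, j)` have both distances at most `t b_n`, and Markov's inequality applied to the number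
of such pairs gives the bound.
-/

open MeasureTheory

/-- Euclidean norm of a vector in `ℝⁿ`. -/
noncomputable def eNorm {n : ℕ} (x : Fin n → ℝ) : ℝ := Real.sqrt (∑ i, (x i) ^ 2)

/-- A growth function: a non-decreasing function `[1,∞) → [1,∞)`. -/
def IsGrowthFunction (g : ℝ → ℝ) : Prop :=
  MonotoneOn g (Set.Ici 1) ∧ ∀ t : ℝ, 1 ≤ t → 1 ≤ g t

/-- The set of gradual non-constant vectors `V_n(r, g, δ, ρ)`. -/
def gradualNonConst (n : ℕ) (r : ℝ) (g : ℝ → ℝ) (δ ρ : ℝ) : Set (Fin n → ℝ) :=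
  {x | ordStat x ⌊r * n⌋₊ = 1 ∧
    (∀ i : Fin n, ordStat x ((i : ℕ) + 1) ≤ g ((n : ℝ) / ((i : ℕ) + 1))) ∧
    ∃ Q₁ Q₂ : Finset (Fin n), δ * n ≤ Q₁.card ∧ δ * n ≤ Q₂.card ∧
      ∀ i ∈ Q₁, ∀ j ∈ Q₂, x j ≤ x i - ρ}

/-- Euclidean distance from a vector to the linear span of a set of vectors. -/
noncomputable def distToSpan {n : ℕ} (v : Fin n → ℝ) (S : Set (Fin n → ℝ)) : ℝ :=
  sInf {r | ∃ w ∈ Submodule.span ℝ S, r = eNorm (fun i => v i - w i)}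

open Finset

section EuclideanNorm

variable {n : ℕ}

lemma eNorm_eq_norm (x : Fin n → ℝ) : eNorm x = ‖WithLp.toLp 2 x‖ := by
  simp [eNorm, EuclideanSpace.norm_eq]

lemma eNorm_nonneg (x : Fin n → ℝ) : 0 ≤ eNorm x := Real.sqrt_nonneg _

lemma eNorm_smul (c : ℝ) (x : Fin n → ℝ) : eNorm (c • x) = |c| * eNorm x := by
  simp only [eNorm_eq_norm, WithLp.toLp_smul, norm_smul, Real.norm_eq_abs]

lemma eNorm_le_sum_abs (x : Fin n → ℝ) : eNorm x ≤ ∑ i, |x i| := by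
  rw [eNorm, Real.sqrt_le_left (sum_nonneg fun i _ => abs_nonneg _)]
  simpa only [sq_abs] using sum_sq_le_sq_sum_of_nonneg fun i _ => abs_nonneg (x i)

lemma continuous_eNorm : Continuous (eNorm : (Fin n → ℝ) → ℝ) := by
  unfold eNorm
  fun_prop

end EuclideanNorm

section DistToSpan

variable {n : ℕ}

lemma distToSpan_nonneg (v : Fin n → ℝ) (S : Set (Fin n → ℝ)) : 0 ≤ distToSpan v S :=
  Real.sInf_nonneg fun _ ⟨_, _, hr⟩ => hr ▸ eNorm_nonneg _

lemma distToSpan_le {v w : Fin n → ℝ} {S : Set (Fin n → ℝ)} (hw : w ∈ Submodule.span ℝ S) :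
    distToSpan v S ≤ eNorm (v - w) :=
  csInf_le ⟨0, fun _ ⟨_, _, hr⟩ => hr ▸ eNorm_nonneg _⟩ ⟨w, hw, rfl⟩

lemma distToSpan_range_eq_iInf {ι : Type*} [Fintype ι] (v : Fin n → ℝ) (u : ι → Fin n → ℝ) :
    distToSpan v (Set.range u) = ⨅ c : ι → ℝ, eNorm (v - ∑ k, c k • u k) := by
  rw [distToSpan, iInf]
  congr 1
  ext s
  simp only [Submodule.mem_span_range_iff_exists_fun, Set.mem_ofPred_eq, Set.mem_range]
  constructor
  · rintro ⟨_, ⟨c, rfl⟩, rfl⟩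
    exact ⟨c, rfl⟩
  · rintro ⟨c, rfl⟩
    exact ⟨_, ⟨c, rfl⟩, rfl⟩

end DistToSpan

section ColumnDistance

variable {n : ℕ}

noncomputable def colDist (M : Matrix (Fin n) (Fin n) ℝ) (i : Fin n) : ℝ :=
  distToSpan (fun l => M l i) {w | ∃ k : Fin n, k ≠ i ∧ w = fun l => M l k}

lemma colDist_nonneg (M : Matrix (Fin n) (Fin n) ℝ) (i : Fin n) : 0 ≤ colDist M i :=
  distToSpan_nonneg _ _

lemma abs_mul_colDist_le (M : Matrix (Fin n) (Fin n) ℝ) (x : Fin n → ℝ) (i : Fin n) :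
    |x i| * colDist M i ≤ eNorm (M.mulVec x) := by
  rcases eq_or_ne (x i) 0 with hx | hx
  · rw [hx, abs_zero, zero_mul]
    exact eNorm_nonneg _
  set w : Fin n → ℝ := -(x i)⁻¹ • ∑ k ∈ univ.erase i, x k • fun l => M l k
  have hw : w ∈ Submodule.span ℝ {w | ∃ k : Fin n, k ≠ i ∧ w = fun l => M l k} :=
    Submodule.smul_mem _ _ <| Submodule.sum_mem _ fun k hk =>
      Submodule.smul_mem _ _ <| Submodule.subset_span ⟨k, ne_of_mem_erase hk, rfl⟩
  have hMx : M.mulVec x = x i • (fun l => M l i) + ∑ k ∈ univ.erase i, x k • fun l => M l k := by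
    rw [add_sum_erase univ (fun k => x k • fun l => M l k) (mem_univ i)]
    ext l
    simp [Matrix.mulVec, dotProduct, Finset.sum_apply, mul_comm]
  have hcol : (fun l => M l i) - w = (x i)⁻¹ • M.mulVec x := by
    simp only [w]
    rw [hMx, smul_add, smul_smul, inv_mul_cancel₀ hx, one_smul, neg_smul, sub_neg_eq_add]
  calc |x i| * colDist M i ≤ |x i| * eNorm ((fun l => M l i) - w) :=
        mul_le_mul_of_nonneg_left (distToSpan_le hw) (abs_nonneg _)
    _ = eNorm (M.mulVec x) := by
        rw [hcol, eNorm_smul, abs_inv, mul_inv_cancel_left₀ (abs_ne_zero.2 hx)]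

-- Stated on `Fin n → Fin n → ℝ`, since `Matrix` has no `MeasurableSpace` instance.
lemma upperSemicontinuous_colDist (i : Fin n) :
    UpperSemicontinuous fun M : Fin n → Fin n → ℝ => colDist (Matrix.of M) i := by
  have hrange (M : Fin n → Fin n → ℝ) : {w | ∃ k : Fin n, k ≠ i ∧ w = fun l => M l k} =
      Set.range fun k : {k // k ≠ i} => fun l => M l k := by
    ext w
    simp [eq_comm]
  simp only [colDist, Matrix.of_apply, hrange, distToSpan_range_eq_iInf]
  refine upperSemicontinuous_ciInf
    (fun M => ⟨0, by rintro _ ⟨c, rfl⟩; exact eNorm_nonneg _⟩) fun c => ?_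
  exact (continuous_eNorm.comp (by fun_prop)).upperSemicontinuous

lemma measurable_colDist {Ω : Type*} [MeasurableSpace Ω] {A : Ω → Matrix (Fin n) (Fin n) ℝ}
    (hA : ∀ i j, Measurable fun ω => A ω i j) (i : Fin n) :
    Measurable fun ω => colDist (A ω) i :=
  (upperSemicontinuous_colDist i).measurable.comp <|
    measurable_pi_lambda _ fun a => measurable_pi_lambda _ fun b => hA a b

end ColumnDistance

section OrderStatistics

variable {n : ℕ} (x : Fin n → ℝ)

lemma isGreatest_abs_sort (j : Fin n) :
    IsGreatest {t : ℝ | n - j ≤ #{i | t ≤ |x i|}} |x (Tuple.sort (fun i => |x i|) j)| := by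
  set σ := Tuple.sort fun i => |x i|
  have hmono : Monotone fun k => |x (σ k)| := Tuple.monotone_sort (fun i => |x i|)
  refine ⟨?_, fun t ht => ?_⟩
  · calc n - (j : ℕ) = #((Ici j).map σ.toEmbedding) := by simp
      _ ≤ _ := card_le_card fun i hi => by
        obtain ⟨k, hk, rfl⟩ := mem_map.1 hi
        simpa using hmono (mem_Ici.1 hk)
  · by_contra! hlt
    have : #{i | t ≤ |x i|} ≤ #((Ioi j).map σ.toEmbedding) := card_le_card fun i hi => by
      refine mem_map.2 ⟨σ.symm i, mem_Ioi.2 (lt_of_not_ge fun hle => ?_), by simp⟩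
      have := hmono hle
      simp only [Equiv.apply_symm_apply] at this
      exact (mem_filter.1 hi).2.not_gt (this.trans_lt hlt)
    simp only [Set.mem_ofPred_eq, card_map, Fin.card_Ioi] at ht this
    omega

lemma ordStat_sub_eq_abs_sort (j : Fin n) :
    ordStat x (n - j) = |x (Tuple.sort (fun i => |x i|) j)| :=
  (isGreatest_abs_sort x j).csSup_eq

lemma le_card_ordStat_le_abs {m : ℕ} (hm₁ : 1 ≤ m) (hmn : m ≤ n) :
    m ≤ #{i | ordStat x m ≤ |x i|} := by
  obtain ⟨j, rfl⟩ : ∃ j : Fin n, n - (j : ℕ) = m := ⟨⟨n - m, by omega⟩, by simp; omega⟩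
  rw [ordStat_sub_eq_abs_sort]
  exact (isGreatest_abs_sort x j).1

lemma sum_ordStat_eq_sum_abs : ∑ i : Fin n, ordStat x ((i : ℕ) + 1) = ∑ i, |x i| :=
  calc ∑ i : Fin n, ordStat x ((i : ℕ) + 1) = ∑ j : Fin n, ordStat x (n - j) :=
        Fintype.sum_equiv Fin.revPerm _ _ fun i => congrArg (ordStat x) <| by
          rw [Fin.revPerm_apply, Fin.val_rev]
          omega
    _ = ∑ j, |x (Tuple.sort (fun i => |x i|) j)| :=
        sum_congr rfl fun j _ => ordStat_sub_eq_abs_sort x j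
    _ = ∑ i, |x i| := Equiv.sum_comp _ fun i => |x i|

end OrderStatistics

lemma div_natCast_succ_le_sub {n i : ℕ} (hi : i < n) : (n : ℝ) / (i + 1) ≤ n - i := by
  have : (i : ℝ) + 1 ≤ n := by exact_mod_cast hi
  rw [div_le_iff₀ (by positivity)]
  nlinarith

lemma sum_div_succ_le_sum_succ_of_monotoneOn {g : ℝ → ℝ} (hg : MonotoneOn g (Set.Ici 1))
    (n : ℕ) :
    ∑ i : Fin n, g ((n : ℝ) / ((i : ℕ) + 1)) ≤ ∑ k ∈ range n, g ((k : ℝ) + 1) := by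
  rw [← Fin.sum_univ_eq_sum_range, ← Equiv.sum_comp Fin.revPerm fun i : Fin n => g ((i : ℕ) + 1)]
  refine sum_le_sum fun i _ => ?_
  have hi : (i : ℝ) + 1 ≤ n := by exact_mod_cast i.isLt
  have hrev : ((Fin.revPerm i : ℕ) : ℝ) + 1 = n - i := by
    rw [Fin.revPerm_apply, Fin.val_rev, Nat.cast_sub i.isLt]
    push_cast
    ring
  rw [hrev]
  refine hg (Set.mem_Ici.2 ?_) (Set.mem_Ici.2 (by linarith)) (div_natCast_succ_le_sub i.isLt)
  rw [le_div_iff₀ (by positivity)]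
  linarith

lemma eNorm_le_sum_of_ordStat_le {n : ℕ} {g : ℝ → ℝ} (hg : MonotoneOn g (Set.Ici 1))
    {x : Fin n → ℝ} (hx : ∀ i : Fin n, ordStat x ((i : ℕ) + 1) ≤ g ((n : ℝ) / ((i : ℕ) + 1))) :
    eNorm x ≤ ∑ k ∈ range n, g ((k : ℝ) + 1) :=
  calc eNorm x ≤ ∑ i, |x i| := eNorm_le_sum_abs x
    _ = ∑ i : Fin n, ordStat x ((i : ℕ) + 1) := (sum_ordStat_eq_sum_abs x).symm
    _ ≤ ∑ i : Fin n, g ((n : ℝ) / ((i : ℕ) + 1)) := sum_le_sum fun i _ => hx i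
    _ ≤ _ := sum_div_succ_le_sum_succ_of_monotoneOn hg n

lemma le_card_colDist_le_of_ordStat_eq_one {n m : ℕ} (hm₁ : 1 ≤ m) (hmn : m ≤ n) {g : ℝ → ℝ}
    (hg : MonotoneOn g (Set.Ici 1)) {M : Matrix (Fin n) (Fin n) ℝ} {x : Fin n → ℝ} {t : ℝ}
    (ht : 0 ≤ t) (hxm : ordStat x m = 1)
    (hxg : ∀ i : Fin n, ordStat x ((i : ℕ) + 1) ≤ g ((n : ℝ) / ((i : ℕ) + 1)))
    (hMx : eNorm (M.mulVec x) ≤ t * eNorm x) :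
    m ≤ #{i | colDist M i ≤ t * ∑ k ∈ range n, g ((k : ℝ) + 1)} := by
  refine (hxm ▸ le_card_ordStat_le_abs x hm₁ hmn).trans (card_le_card fun i hi => ?_)
  simp only [mem_filter, mem_univ, true_and] at hi ⊢
  calc colDist M i ≤ |x i| * colDist M i := le_mul_of_one_le_left (colDist_nonneg M i) hi
    _ ≤ eNorm (M.mulVec x) := abs_mul_colDist_le M x i
    _ ≤ t * eNorm x := hMx
    _ ≤ _ := mul_le_mul_of_nonneg_left (eNorm_le_sum_of_ordStat_le hg hxg) ht

lemma natCast_mul_measureReal_le_sum {Ω ι : Type*} [MeasurableSpace Ω] {μ : Measure Ω}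
    [IsFiniteMeasure μ] {s : Finset ι} {S : ι → Set Ω} (hS : ∀ i ∈ s, MeasurableSet (S i))
    {E : Set Ω} {N : ℕ} (hE : ∀ ω ∈ E, ∃ t ⊆ s, N ≤ #t ∧ ∀ i ∈ t, ω ∈ S i) :
    N * μ.real E ≤ ∑ i ∈ s, μ.real (S i) := by
  set f : Ω → ENNReal := fun ω => ∑ i ∈ s, (S i).indicator 1 ω
  have hf : Measurable f := Finset.measurable_sum _ fun i hi => measurable_const.indicator (hS i hi)
  have hEf : E ⊆ {ω | (N : ENNReal) ≤ f ω} := fun ω hω => by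
    obtain ⟨t, hts, hNt, hωt⟩ := hE ω hω
    calc (N : ENNReal) ≤ ∑ i ∈ t, (S i).indicator 1 ω := by
          rw [sum_congr rfl fun i hi => Set.indicator_of_mem (hωt i hi) _]
          simpa using hNt
      _ ≤ f ω := sum_le_sum_of_subset hts
  have hmarkov : (N : ENNReal) * μ E ≤ ∑ i ∈ s, μ (S i) :=
    calc (N : ENNReal) * μ E ≤ N * μ {ω | (N : ENNReal) ≤ f ω} := by gcongr
      _ ≤ ∫⁻ ω, f ω ∂μ := mul_meas_ge_le_lintegral₀ hf.aemeasurable _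
      _ = ∑ i ∈ s, μ (S i) := by
        rw [lintegral_finsetSum s (f := fun i => (S i).indicator 1)
          fun i hi => measurable_const.indicator (hS i hi)]
        exact sum_congr rfl fun i hi => lintegral_indicator_one (hS i hi)
  have := ENNReal.toReal_mono (ENNReal.sum_ne_top.2 fun i _ => measure_ne_top μ _) hmarkov
  rwa [ENNReal.toReal_mul, ENNReal.toReal_natCast, ENNReal.toReal_sum
    fun i _ => measure_ne_top μ _] at this

lemma mul_self_sub_le_card_offDiag {α : Type*} [DecidableEq α] {s : Finset α} {m : ℕ}
    (hm : m ≤ #s) : m * m - m ≤ #s.offDiag := by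
  rw [offDiag_card, ← Nat.mul_sub_one, ← Nat.mul_sub_one]
  exact Nat.mul_le_mul hm (Nat.sub_le_sub_right hm 1)

lemma sum_offDiag_univ {ι M : Type*} [Fintype ι] [DecidableEq ι] [AddCommMonoid M]
    (f : ι × ι → M) :
    ∑ p ∈ (univ : Finset ι).offDiag, f p = ∑ i, ∑ j, if i ≠ j then f (i, j) else 0 := by
  have : (univ : Finset ι).offDiag = univ.filter fun p : ι × ι => p.1 ≠ p.2 := by
    ext p
    simp
  rw [this, sum_filter, Fintype.sum_prod_type]

lemma sq_le_two_mul_floor_mul_self_sub_floor {a : ℝ} (ha : 6 ≤ a) :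
    a ^ 2 ≤ 2 * ((⌊a⌋₊ * ⌊a⌋₊ - ⌊a⌋₊ : ℕ) : ℝ) := by
  have h6 : 6 ≤ ⌊a⌋₊ := Nat.le_floor (by exact_mod_cast ha)
  have hlt : a < ⌊a⌋₊ + 1 := Nat.lt_floor_add_one a
  rw [Nat.cast_sub (Nat.le_mul_self _), Nat.cast_mul]
  have : (6 : ℝ) ≤ ⌊a⌋₊ := by exact_mod_cast h6
  nlinarith

/-- Invertibility over gradual non-constant vectors via distances of columns to the spans of
the remaining columns. -/
theorem invertibility_via_distance :
    ∀ n : ℕ, ∀ r δ ρ : ℝ,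
      r ∈ Set.Ioo (0 : ℝ) 1 → δ ∈ Set.Ioo (0 : ℝ) 1 → ρ ∈ Set.Ioo (0 : ℝ) 1 →
      ∀ g : ℝ → ℝ, IsGrowthFunction g → 6 / r ≤ (n : ℝ) →
        ∀ (Ω : Type) [MeasurableSpace Ω] (μ : Measure Ω), IsProbabilityMeasure μ →
          ∀ A : Ω → Matrix (Fin n) (Fin n) ℝ, (∀ i j, Measurable fun ω => A ω i j) →
            ∀ t : ℝ, 0 < t →
              (μ {ω | ∃ x ∈ gradualNonConst n r g δ ρ,
                  eNorm ((A ω).mulVec x) ≤ t * eNorm x}).toReal ≤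
                2 / (r * n) ^ 2 *
                  ∑ i : Fin n, ∑ j : Fin n,
                    (if i ≠ j then
                      (μ {ω |
                        distToSpan (fun l => A ω l i)
                            {w | ∃ k : Fin n, k ≠ i ∧ w = fun l => A ω l k} ≤
                          t * (∑ k ∈ Finset.range n, g ((k : ℝ) + 1)) ∧
                        distToSpan (fun l => A ω l j)
                            {w | ∃ k : Fin n, k ≠ j ∧ w = fun l => A ω l k} ≤
                          t * (∑ k ∈ Finset.range n, g ((k : ℝ) + 1))}).toReal
                    else 0) := by
  intro n r δ ρ hr _ _ g hg hn Ω _ μ _ A hA t ht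
  set b := ∑ k ∈ range n, g ((k : ℝ) + 1)
  set E := {ω | ∃ x ∈ gradualNonConst n r g δ ρ, eNorm ((A ω).mulVec x) ≤ t * eNorm x}
  set D : Fin n → Set Ω := fun i => {ω | colDist (A ω) i ≤ t * b}
  change μ.real E ≤ 2 / (r * n) ^ 2 * ∑ i, ∑ j, if i ≠ j then μ.real (D i ∩ D j) else 0
  set m := ⌊r * n⌋₊
  have hrn : 6 ≤ r * n := by rwa [div_le_iff₀' hr.1] at hn
  have hm₁ : 1 ≤ m := Nat.le_floor (by push_cast; linarith)
  have hmn : m ≤ n := Nat.floor_le_of_le (by nlinarith [hr.2])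
  have hcount : ∀ ω ∈ E,
      ∃ s ⊆ (univ : Finset (Fin n)).offDiag, m * m - m ≤ #s ∧ ∀ p ∈ s, ω ∈ D p.1 ∩ D p.2 := by
    rintro ω ⟨x, ⟨hxm, hxg, -⟩, hAx⟩
    refine ⟨_, offDiag_mono (subset_univ _), mul_self_sub_le_card_offDiag
      (le_card_colDist_le_of_ordStat_eq_one hm₁ hmn hg.1 ht.le hxm hxg hAx), fun p hp => ?_⟩
    obtain ⟨h₁, h₂, -⟩ := mem_offDiag.1 hp
    exact ⟨(mem_filter.1 h₁).2, (mem_filter.1 h₂).2⟩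
  have hD (i : Fin n) : MeasurableSet (D i) :=
    measurableSet_le (measurable_colDist hA i) measurable_const
  have key := natCast_mul_measureReal_le_sum (μ := μ) (fun p _ => (hD p.1).inter (hD p.2)) hcount
  rw [sum_offDiag_univ] at key
  rw [div_mul_eq_mul_div, le_div_iff₀ (by positivity)]
  calc μ.real E * (r * n) ^ 2 ≤ μ.real E * (2 * (m * m - m : ℕ)) :=
        mul_le_mul_of_nonneg_left (sq_le_two_mul_floor_mul_self_sub_floor hrn) measureReal_nonneg
    _ = 2 * ((m * m - m : ℕ) * μ.real E) := by ring
    _ ≤ _ := by gcongr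
end

section
/- Let z be a nonzero complex number, let ε ∈ [0, |z|/2], and let W be a complex-valued random variable with E W = 0 and |W| ≤ ε almost surely. Then |E|z + W| − |z|| ≤ ε²/|z|. -/
/-!
For `x ≠ 0`, `‖x + y‖` lies between its linearisation `‖x‖ + ⟪x, y⟫ / ‖x‖` in `y`
(Cauchy–Schwarz) and that linearisation plus `‖y‖ ^ 2 / (2 ‖x‖)`
(AM–GM: `2 ‖x‖ ‖x + y‖ ≤ ‖x‖ ^ 2 + ‖x + y‖ ^ 2`). For centred `W` the linearisation has mean
`‖x‖`, so `|E ‖x + W‖ - ‖x‖| ≤ E ‖W‖ ^ 2 / (2 ‖x‖)`, and `E ‖W‖ ^ 2 ≤ ε ^ 2`.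
-/

open MeasureTheory

open scoped RealInnerProductSpace

section InnerProductSpace

variable {F : Type*} [NormedAddCommGroup F] [InnerProductSpace ℝ F]

theorem norm_add_inner_div_norm_le_norm_add (x y : F) :
    ‖x‖ + ⟪x, y⟫ / ‖x‖ ≤ ‖x + y‖ := by
  rcases eq_or_ne x 0 with rfl | hx
  · simp
  have hx' : 0 < ‖x‖ := norm_pos_iff.mpr hx
  calc ‖x‖ + ⟪x, y⟫ / ‖x‖ = ⟪x, x + y⟫ / ‖x‖ := by
        rw [inner_add_right, real_inner_self_eq_norm_sq]; field_simp
    _ ≤ ‖x‖ * ‖x + y‖ / ‖x‖ := by gcongr; exact real_inner_le_norm x (x + y)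
    _ = ‖x + y‖ := by field_simp

theorem norm_add_le_norm_add_inner_div_norm_add_sq {x : F} (hx : x ≠ 0) (y : F) :
    ‖x + y‖ ≤ ‖x‖ + ⟪x, y⟫ / ‖x‖ + ‖y‖ ^ 2 / (2 * ‖x‖) := by
  have hx' : 0 < ‖x‖ := norm_pos_iff.mpr hx
  have h_rhs : ‖x‖ + ⟪x, y⟫ / ‖x‖ + ‖y‖ ^ 2 / (2 * ‖x‖)
      = (‖x‖ ^ 2 + ‖x + y‖ ^ 2) / (2 * ‖x‖) := by
    rw [norm_add_sq_real]; field_simp; ring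
  rw [h_rhs, le_div_iff₀ (by positivity)]
  nlinarith [sq_nonneg (‖x‖ - ‖x + y‖)]

end InnerProductSpace

section Integral

variable {Ω F : Type*} [MeasurableSpace Ω] {μ : Measure Ω} [IsProbabilityMeasure μ]
  [NormedAddCommGroup F] [InnerProductSpace ℝ F] [CompleteSpace F]

theorem abs_integral_norm_add_sub_norm_le {X : Ω → F} (hX : Integrable X μ)
    (hX2 : Integrable (fun ω ↦ ‖X ω‖ ^ 2) μ) (hmean : ∫ ω, X ω ∂μ = 0) {x : F} (hx : x ≠ 0) :
    |∫ ω, ‖x + X ω‖ ∂μ - ‖x‖| ≤ (∫ ω, ‖X ω‖ ^ 2 ∂μ) / (2 * ‖x‖) := by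
  have h_norm : Integrable (fun ω ↦ ‖x + X ω‖) μ := ((integrable_const x).add hX).norm
  have h_inner : Integrable (fun ω ↦ ⟪x, X ω⟫ / ‖x‖) μ := (hX.const_inner x).div_const _
  have h_lin : ∫ ω, (‖x‖ + ⟪x, X ω⟫ / ‖x‖) ∂μ = ‖x‖ := by
    rw [integral_add (integrable_const _) h_inner, integral_div, integral_inner hX, hmean]
    simp
  have lower : ‖x‖ ≤ ∫ ω, ‖x + X ω‖ ∂μ := h_lin ▸
    integral_mono ((integrable_const _).add h_inner) h_norm
      fun ω ↦ norm_add_inner_div_norm_le_norm_add x (X ω)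
  have upper : ∫ ω, ‖x + X ω‖ ∂μ ≤ ‖x‖ + (∫ ω, ‖X ω‖ ^ 2 ∂μ) / (2 * ‖x‖) := by
    calc ∫ ω, ‖x + X ω‖ ∂μ
        ≤ ∫ ω, (‖x‖ + ⟪x, X ω⟫ / ‖x‖ + ‖X ω‖ ^ 2 / (2 * ‖x‖)) ∂μ :=
          integral_mono h_norm (((integrable_const _).add h_inner).add (hX2.div_const _))
            fun ω ↦ norm_add_le_norm_add_inner_div_norm_add_sq hx (X ω)
      _ = ‖x‖ + (∫ ω, ‖X ω‖ ^ 2 ∂μ) / (2 * ‖x‖) := by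
          rw [integral_add (f := fun ω ↦ ‖x‖ + ⟪x, X ω⟫ / ‖x‖)
            ((integrable_const _).add h_inner) (hX2.div_const _), h_lin, integral_div]
  have h_moment : 0 ≤ ∫ ω, ‖X ω‖ ^ 2 ∂μ := integral_nonneg fun ω ↦ sq_nonneg ‖X ω‖
  rw [abs_le]
  constructor <;> linarith [div_nonneg h_moment (by positivity : (0 : ℝ) ≤ 2 * ‖x‖)]

end Integral

theorem expectation_abs_perturbation :
    ∀ (Ω : Type) [MeasurableSpace Ω] (μ : Measure Ω), IsProbabilityMeasure μ →
      ∀ (z : ℂ) (ε : ℝ), z ≠ 0 → 0 ≤ ε → ε ≤ ‖z‖ / 2 →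
        ∀ W : Ω → ℂ, Measurable W → (∫ ω, W ω ∂μ) = 0 →
          (∀ᵐ ω ∂μ, ‖W ω‖ ≤ ε) →
          |(∫ ω, ‖z + W ω‖ ∂μ) - ‖z‖| ≤ ε ^ 2 / ‖z‖ := by
  intro Ω _ μ _ z ε hz _ _ W hWm hmean hWε
  have hW : Integrable W μ := .of_bound hWm.aestronglyMeasurable ε hWε
  have hW2ε : ∀ᵐ ω ∂μ, ‖W ω‖ ^ 2 ≤ ε ^ 2 := by
    filter_upwards [hWε] with ω hω
    exact pow_le_pow_left₀ (norm_nonneg _) hω 2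
  have hW2 : Integrable (fun ω ↦ ‖W ω‖ ^ 2) μ :=
    .of_bound (hWm.norm.pow_const 2).aestronglyMeasurable (ε ^ 2) (by simpa using hW2ε)
  have hmoment : ∫ ω, ‖W ω‖ ^ 2 ∂μ ≤ ε ^ 2 := by
    simpa using integral_mono_ae hW2 (integrable_const _) hW2ε
  have hz' : 0 < ‖z‖ := norm_pos_iff.mpr hz
  calc |(∫ ω, ‖z + W ω‖ ∂μ) - ‖z‖| ≤ (∫ ω, ‖W ω‖ ^ 2 ∂μ) / (2 * ‖z‖) :=
        abs_integral_norm_add_sub_norm_le hW hW2 hmean hz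
    _ ≤ ε ^ 2 / (2 * ‖z‖) := by gcongr
    _ ≤ ε ^ 2 / ‖z‖ := by gcongr; linarith
end
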